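/- arXiv:0901.4616 — 3 statements merged into one kernel-verified Lean document; each statement's English description precedes it below -/
import Mathlib

section
/- Let (X_t) be a reversible irreducible Markov chain on a countable state space V with stationary measure π of infinite total mass and transition matrix P, and suppose the bottom of the spectrum of I−P on ℓ²(π) is at least λ₁ > 0, i.e. ⟨f,(I−P)f⟩ ≥ λ₁⟨f,f⟩ for all f ∈ ℓ²(π). Then for any nonempty set A ⊆ V with π(A) < ∞, starting the chain from the measure π_A = π(·∩A)/π(A), the probability that the chain never returns to A after time 0 is at least λ₁. -/
open MeasureTheory

/-- `P` is a stochastic transition kernel on the countable state space `V`. -/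
def IsTransitionKernel {V : Type*} (P : V → V → ℝ) : Prop :=
  (∀ x y, 0 ≤ P x y) ∧ ∀ x, HasSum (P x) 1

/-- The chain with kernel `P` is irreducible. -/
def KernelIrreducible {V : Type*} (P : V → V → ℝ) : Prop :=
  ∀ x y, Relation.ReflTransGen (fun a b => 0 < P a b) x y

/-- `π` is a reversing (hence stationary) measure for `P`, with positive weights. -/
def IsReversing {V : Type*} (P : V → V → ℝ) (π : V → ℝ) : Prop :=
  (∀ x, 0 < π x) ∧ ∀ x y, π x * P x y = π y * P y x

open scoped Classical in
/-- `μ x` is the law on path space `ℕ → V` of the Markov chain with transition kernel `P`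
started at `x`: cylinder sets have the product probabilities. -/
def IsMarkovPathLaw {V : Type*} [MeasurableSpace V] (P : V → V → ℝ)
    (μ : V → Measure (ℕ → V)) : Prop :=
  (∀ x, IsProbabilityMeasure (μ x)) ∧
    ∀ (x : V) (n : ℕ) (path : ℕ → V),
      μ x {ω | ∀ i ≤ n, ω i = path i} =
        (if path 0 = x then 1 else 0) *
          ∏ i ∈ Finset.range n, ENNReal.ofReal (P (path i) (path (i + 1)))

/-- `⟨f, (I-P) f⟩ ≥ lam ⟨f, f⟩` for all `f ∈ ℓ²(π)`: the bottom of the spectrum of `I - P`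
is at least `lam`. -/
def SpectralGapLB {V : Type*} (P : V → V → ℝ) (π : V → ℝ) (lam : ℝ) : Prop :=
  ∀ f : V → ℝ, Summable (fun x => π x * f x ^ 2) →
    lam * ∑' x, π x * f x ^ 2 ≤ ∑' x, π x * f x * (f x - ∑' y, P x y * f y)

/-!
Let `h n x` be the probability that the chain started at `x` visits `A` at one of the times
`0, …, n`. It equals `1` on `A`, satisfies `h n ≤ P (h n)` off `A`, and lies in `ℓ²(π)` because
`π(A) < ∞` and `π` is stationary. The spectral gap applied to `h n` gives
`λ π(A) ≤ λ ⟨h n, h n⟩ ≤ ⟨h n, (I - P) h n⟩ ≤ ∑_{x ∈ A} π x (1 - P (h n) x)`.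
As `n → ∞`, `P (h n) x` increases to the return probability from `x`, which bounds the probability
of the return event under the path law through its decomposition into cylinder sets.
-/

open Filter Topology
open scoped ENNReal Classical

noncomputable section

variable {V : Type*}

def kernelMulVec (P : V → V → ℝ) (f : V → ℝ) (x : V) : ℝ := ∑' y, P x y * f y

/-- `hitProb P A n x` is the probability that the chain started at `x` visits `A` at one of the
times `0, …, n`. -/
def hitProb (P : V → V → ℝ) (A : Set V) : ℕ → V → ℝ
  | 0 => fun x => if x ∈ A then 1 else 0
  | n + 1 => fun x => if x ∈ A then 1 else kernelMulVec P (hitProb P A n) x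

/-- The probability that the chain started at `x` visits `A` at some time `t > 0`. -/
def returnProb (P : V → V → ℝ) (A : Set V) (x : V) : ℝ :=
  ⨆ n, kernelMulVec P (hitProb P A n) x

end

lemma hitProb_of_mem {P : V → V → ℝ} {A : Set V} (n : ℕ) {x : V} (hx : x ∈ A) :
    hitProb P A n x = 1 := by
  cases n <;> simp [hitProb, hx]

namespace IsTransitionKernel

variable {P : V → V → ℝ} {A : Set V} {f g : V → ℝ}

lemma summable_mul (hP : IsTransitionKernel P) (h0 : 0 ≤ f) (h1 : f ≤ 1) (x : V) :
    Summable fun y => P x y * f y :=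
  (hP.2 x).summable.of_nonneg_of_le (fun y => mul_nonneg (hP.1 x y) (h0 y))
    fun y => mul_le_of_le_one_right (hP.1 x y) (h1 y)

lemma kernelMulVec_nonneg (hP : IsTransitionKernel P) (h0 : 0 ≤ f) : 0 ≤ kernelMulVec P f :=
  fun x => tsum_nonneg fun y => mul_nonneg (hP.1 x y) (h0 y)

lemma kernelMulVec_le_one (hP : IsTransitionKernel P) (h0 : 0 ≤ f) (h1 : f ≤ 1) :
    kernelMulVec P f ≤ 1 := fun x =>
  ((hP.summable_mul h0 h1 x).tsum_le_tsum (fun y => mul_le_of_le_one_right (hP.1 x y) (h1 y))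
    (hP.2 x).summable).trans_eq (hP.2 x).tsum_eq

lemma kernelMulVec_mono (hP : IsTransitionKernel P) (hf : 0 ≤ f) (hg : g ≤ 1) (hfg : f ≤ g) :
    kernelMulVec P f ≤ kernelMulVec P g := fun x =>
  (hP.summable_mul hf (hfg.trans hg) x).tsum_le_tsum
    (fun y => mul_le_mul_of_nonneg_left (hfg y) (hP.1 x y))
    (hP.summable_mul (hf.trans hfg) hg x)

lemma hitProb_nonneg (hP : IsTransitionKernel P) (n : ℕ) : 0 ≤ hitProb P A n := by
  induction n with
  | zero => intro x; dsimp [hitProb]; split_ifs <;> norm_num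
  | succ n ih =>
    intro x; dsimp [hitProb]; split_ifs
    · exact zero_le_one
    · exact hP.kernelMulVec_nonneg ih x

lemma hitProb_le_one (hP : IsTransitionKernel P) (n : ℕ) : hitProb P A n ≤ 1 := by
  induction n with
  | zero => intro x; dsimp [hitProb]; split_ifs <;> norm_num
  | succ n ih =>
    intro x; dsimp [hitProb]; split_ifs
    · exact le_rfl
    · exact hP.kernelMulVec_le_one (hP.hitProb_nonneg n) ih x

lemma hitProb_mono (hP : IsTransitionKernel P) : Monotone (hitProb P A) := by
  refine monotone_nat_of_le_succ fun n => ?_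
  induction n with
  | zero =>
    intro x; dsimp [hitProb]; split_ifs
    · exact le_rfl
    · exact hP.kernelMulVec_nonneg (hP.hitProb_nonneg 0) x
  | succ n ih =>
    intro x; dsimp [hitProb]; split_ifs
    · exact le_rfl
    · exact hP.kernelMulVec_mono (hP.hitProb_nonneg n) (hP.hitProb_le_one (n + 1)) ih x

lemma hitProb_le_kernelMulVec (hP : IsTransitionKernel P) (n : ℕ) {x : V} (hx : x ∉ A) :
    hitProb P A n x ≤ kernelMulVec P (hitProb P A n) x := by
  cases n with
  | zero => simpa [hitProb, hx] using hP.kernelMulVec_nonneg (hP.hitProb_nonneg 0) x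
  | succ n =>
    simp only [hitProb, if_neg hx]
    exact hP.kernelMulVec_mono (hP.hitProb_nonneg n) (hP.hitProb_le_one (n + 1))
      (hP.hitProb_mono n.le_succ) x

lemma monotone_kernelMulVec_hitProb (hP : IsTransitionKernel P) (x : V) :
    Monotone fun n => kernelMulVec P (hitProb P A n) x := fun _ _ hmn =>
  hP.kernelMulVec_mono (hP.hitProb_nonneg _) (hP.hitProb_le_one _) (hP.hitProb_mono hmn) x

lemma tendsto_returnProb (hP : IsTransitionKernel P) (x : V) :
    Tendsto (fun n => kernelMulVec P (hitProb P A n) x) atTop (𝓝 (returnProb P A x)) :=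
  tendsto_atTop_ciSup (hP.monotone_kernelMulVec_hitProb x)
    ⟨1, Set.forall_mem_range.2 fun n =>
      hP.kernelMulVec_le_one (hP.hitProb_nonneg n) (hP.hitProb_le_one n) x⟩

lemma returnProb_nonneg (hP : IsTransitionKernel P) (x : V) : 0 ≤ returnProb P A x :=
  ge_of_tendsto' (hP.tendsto_returnProb x) fun n =>
    hP.kernelMulVec_nonneg (hP.hitProb_nonneg n) x

lemma returnProb_le_one (hP : IsTransitionKernel P) (x : V) : returnProb P A x ≤ 1 :=
  le_of_tendsto' (hP.tendsto_returnProb x) fun n =>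
    hP.kernelMulVec_le_one (hP.hitProb_nonneg n) (hP.hitProb_le_one n) x

end IsTransitionKernel

namespace IsReversing

variable {P : V → V → ℝ} {π : V → ℝ} {g : V → ℝ}

lemma hasSum_mul_kernelMulVec (hrev : IsReversing P π) (hP : IsTransitionKernel P)
    (hg : 0 ≤ g) (hπg : Summable fun y => π y * g y) :
    HasSum (fun x => π x * kernelMulVec P g x) (∑' y, π y * g y) := by
  set F : V × V → ℝ := fun p => π p.1 * g p.1 * P p.1 p.2
  have hF0 : 0 ≤ F := fun p => mul_nonneg (mul_nonneg (hrev.1 _).le (hg _)) (hP.1 _ _)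
  have hfiber : ∀ y, HasSum (fun x => F (y, x)) (π y * g y) := fun y => by
    simpa using (hP.2 y).mul_left (π y * g y)
  have hF : Summable F := (summable_prod_of_nonneg hF0).2
    ⟨fun y => (hfiber y).summable, by simpa only [(hfiber _).tsum_eq] using hπg⟩
  have hsum : HasSum (fun p : V × V => F p.swap) (∑' y, π y * g y) :=
    ((Equiv.prodComm V V).hasSum_iff (f := F)).2 <| by
      simpa only [hF.tsum_prod' fun y => (hfiber y).summable, (hfiber _).tsum_eq] using hF.hasSum
  refine hsum.prod_fiberwise fun x => ?_
  have hswap : (fun y => F (x, y).swap) = fun y => π x * (P x y * g y) := by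
    funext y
    simp only [F, Prod.swap_prod_mk]
    rw [← mul_assoc, hrev.2 x y]
    ring
  rw [kernelMulVec, ← tsum_mul_left, ← hswap]
  exact (hF.prod_symm.prod_factor x).hasSum

end IsReversing

lemma ite_mul_one_sub_mem_Icc {π g : V → ℝ} {A : Set V} {x : V} (hπ : 0 ≤ π x)
    (hg0 : 0 ≤ g x) (hg1 : g x ≤ 1) :
    (if x ∈ A then π x * (1 - g x) else 0) ∈ Set.Icc 0 (if x ∈ A then π x else 0) := by
  split_ifs
  · exact ⟨mul_nonneg hπ (sub_nonneg.2 hg1), mul_le_of_le_one_right hπ (by linarith)⟩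
  · exact ⟨le_rfl, le_rfl⟩

lemma IsTransitionKernel.summable_mul_hitProb {P : V → V → ℝ} {π : V → ℝ} {A : Set V}
    (hP : IsTransitionKernel P) (hrev : IsReversing P π)
    (hAfin : Summable fun x => if x ∈ A then π x else 0) (n : ℕ) :
    Summable fun x => π x * hitProb P A n x := by
  induction n with
  | zero => exact hAfin.congr fun x => by by_cases hx : x ∈ A <;> simp [hitProb, hx]
  | succ n ih =>
    have hstep := (hrev.hasSum_mul_kernelMulVec hP (hP.hitProb_nonneg n) ih).summable
    refine (hAfin.add hstep).of_nonneg_of_le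
      (fun x => mul_nonneg (hrev.1 x).le (hP.hitProb_nonneg _ x)) fun x => ?_
    have hu := mul_nonneg (hrev.1 x).le
      (hP.kernelMulVec_nonneg (hP.hitProb_nonneg (A := A) n) x)
    by_cases hx : x ∈ A <;> simp [hitProb, hx, hu]

namespace SpectralGapLB

variable {P : V → V → ℝ} {π : V → ℝ} {lam : ℝ} {A : Set V} {f : V → ℝ}

lemma mul_tsum_le (hgap : SpectralGapLB P π lam) (hP : IsTransitionKernel P)
    (hrev : IsReversing P π) (hlam : 0 ≤ lam)
    (hAfin : Summable fun x => if x ∈ A then π x else 0)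
    (h0 : 0 ≤ f) (h1 : f ≤ 1) (hfA : ∀ x ∈ A, f x = 1)
    (hsub : ∀ x ∉ A, f x ≤ kernelMulVec P f x) (hf : Summable fun x => π x * f x) :
    lam * ∑' x, (if x ∈ A then π x else 0) ≤
      ∑' x, if x ∈ A then π x * (1 - kernelMulVec P f x) else 0 := by
  set u := kernelMulVec P f
  have hu0 : 0 ≤ u := hP.kernelMulVec_nonneg h0
  have hu1 : u ≤ 1 := hP.kernelMulVec_le_one h0 h1
  have hπu : Summable fun x => π x * u x := (hrev.hasSum_mul_kernelMulVec hP h0 hf).summable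
  have hsq : Summable fun x => π x * f x ^ 2 :=
    hf.of_nonneg_of_le (fun x => mul_nonneg (hrev.1 x).le (sq_nonneg _))
      fun x => mul_le_mul_of_nonneg_left (sq_le (h0 x) (h1 x)) (hrev.1 x).le
  have hfu : Summable fun x => π x * f x * u x :=
    hπu.of_nonneg_of_le (fun x => mul_nonneg (mul_nonneg (hrev.1 x).le (h0 x)) (hu0 x))
      fun x => mul_le_mul_of_nonneg_right (mul_le_of_le_one_right (hrev.1 x).le (h1 x)) (hu0 x)
  have hdir : Summable fun x => π x * f x * (f x - u x) :=
    (hsq.sub hfu).congr fun x => by ring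
  have hesc : Summable fun x => if x ∈ A then π x * (1 - u x) else 0 :=
    hAfin.of_nonneg_of_le (fun x => (ite_mul_one_sub_mem_Icc (hrev.1 x).le (hu0 x) (hu1 x)).1)
      fun x => (ite_mul_one_sub_mem_Icc (hrev.1 x).le (hu0 x) (hu1 x)).2
  calc lam * ∑' x, (if x ∈ A then π x else 0) ≤ lam * ∑' x, π x * f x ^ 2 := by
        refine mul_le_mul_of_nonneg_left (hAfin.tsum_le_tsum (fun x => ?_) hsq) hlam
        by_cases hx : x ∈ A
        · simp [hx, hfA x hx]
        · simpa [hx] using mul_nonneg (hrev.1 x).le (sq_nonneg (f x))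
    _ ≤ ∑' x, π x * f x * (f x - u x) := hgap f hsq
    _ ≤ _ := by
        refine hdir.tsum_le_tsum (fun x => ?_) hesc
        by_cases hx : x ∈ A
        · simp [hx, hfA x hx]
        · simpa [hx] using mul_nonpos_of_nonneg_of_nonpos
            (mul_nonneg (hrev.1 x).le (h0 x)) (sub_nonpos.2 (hsub x hx))

lemma mul_tsum_le_returnProb (hgap : SpectralGapLB P π lam) (hP : IsTransitionKernel P)
    (hrev : IsReversing P π) (hlam : 0 ≤ lam)
    (hAfin : Summable fun x => if x ∈ A then π x else 0) :
    lam * ∑' x, (if x ∈ A then π x else 0) ≤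
      ∑' x, if x ∈ A then π x * (1 - returnProb P A x) else 0 := by
  have hlim : Tendsto
      (fun n => ∑' x, if x ∈ A then π x * (1 - kernelMulVec P (hitProb P A n) x) else 0)
      atTop (𝓝 (∑' x, if x ∈ A then π x * (1 - returnProb P A x) else 0)) := by
    refine tendsto_tsum_of_dominated_convergence hAfin (fun x => ?_)
      (Eventually.of_forall fun n x => ?_)
    · by_cases hx : x ∈ A
      · simpa [hx] using ((hP.tendsto_returnProb x).const_sub 1).const_mul (π x)
      · simp [hx]
    · have hmem := ite_mul_one_sub_mem_Icc (A := A) (hrev.1 x).le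
        (hP.kernelMulVec_nonneg (hP.hitProb_nonneg (A := A) n) x)
        (hP.kernelMulVec_le_one (hP.hitProb_nonneg (A := A) n) (hP.hitProb_le_one n) x)
      rw [Real.norm_of_nonneg hmem.1]
      exact hmem.2
  exact ge_of_tendsto' hlim fun n => hgap.mul_tsum_le hP hrev hlam hAfin (hP.hitProb_nonneg n)
    (hP.hitProb_le_one n) (fun x hx => hitProb_of_mem n hx)
    (fun x hx => hP.hitProb_le_kernelMulVec n hx) (hP.summable_mul_hitProb hrev hAfin n)

end SpectralGapLB

def pathCylinder (m : ℕ) (path : ℕ → V) : Set (ℕ → V) := {ω | ∀ i ≤ m, ω i = path i}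

def visitsIcc (A : Set V) (a b : ℕ) : Set (ℕ → V) := {ω | ∃ t ∈ Set.Icc a b, ω t ∈ A}

lemma pathCylinder_subset_iUnion (m : ℕ) (path : ℕ → V) :
    pathCylinder m path ⊆ ⋃ y, pathCylinder (m + 1) (Function.update path (m + 1) y) := by
  intro ω hω
  refine Set.mem_iUnion.2 ⟨ω (m + 1), fun i hi => ?_⟩
  rcases (Nat.le_succ_iff.1 hi) with hi | rfl
  · rw [Function.update_of_ne (by omega)]
    exact hω i hi
  · rw [Function.update_self]

lemma measure_pathCylinder_inter_le_tsum [Countable V] [MeasurableSpace V]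
    (ν : Measure (ℕ → V)) (m : ℕ) (path : ℕ → V) (S : Set (ℕ → V)) :
    ν (pathCylinder m path ∩ S) ≤
      ∑' y, ν (pathCylinder (m + 1) (Function.update path (m + 1) y) ∩ S) := by
  refine (measure_mono ?_).trans (measure_iUnion_le _)
  rw [← Set.iUnion_inter]
  exact Set.inter_subset_inter_left S (pathCylinder_subset_iUnion m path)

namespace IsMarkovPathLaw

variable [MeasurableSpace V] {P : V → V → ℝ} {μ : V → Measure (ℕ → V)} {A : Set V}

lemma measure_pathCylinder (hμ : IsMarkovPathLaw P μ) (x : V) (m : ℕ) (path : ℕ → V) :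
    μ x (pathCylinder m path) =
      (if path 0 = x then 1 else 0) *
        ∏ i ∈ Finset.range m, ENNReal.ofReal (P (path i) (path (i + 1))) :=
  hμ.2 x m path

lemma measure_pathCylinder_succ (hμ : IsMarkovPathLaw P μ) (x : V) (m : ℕ) (path : ℕ → V)
    (y : V) :
    μ x (pathCylinder (m + 1) (Function.update path (m + 1) y)) =
      μ x (pathCylinder m path) * ENNReal.ofReal (P (path m) y) := by
  rw [hμ.measure_pathCylinder, hμ.measure_pathCylinder, Finset.prod_range_succ, ← mul_assoc,
    Function.update_of_ne (by omega), Function.update_of_ne (by omega), Function.update_self]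
  congr 2
  refine Finset.prod_congr rfl fun i hi => ?_
  have hi := Finset.mem_range.1 hi
  rw [Function.update_of_ne (by omega), Function.update_of_ne (by omega)]

lemma measure_compl_pathCylinder_zero [Countable V] (hμ : IsMarkovPathLaw P μ) (x : V) :
    μ x (pathCylinder 0 fun _ => x)ᶜ = 0 := by
  have hcover :
      (pathCylinder 0 fun _ => x)ᶜ ⊆ ⋃ y : {y // y ≠ x}, pathCylinder 0 fun _ => y.1 := by
    intro ω hω
    have h0 : ω 0 ≠ x := fun h => hω fun i hi => by rw [Nat.le_zero.1 hi, h]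
    exact Set.mem_iUnion.2 ⟨⟨ω 0, h0⟩, fun i hi => by rw [Nat.le_zero.1 hi]⟩
  exact measure_mono_null hcover <| measure_iUnion_null fun y => by
    simp [hμ.measure_pathCylinder, y.2]

/-- One step of the Markov property. -/
lemma measure_pathCylinder_inter_le_kernelMulVec [Countable V] (hμ : IsMarkovPathLaw P μ)
    (hP : IsTransitionKernel P) {x : V} {m : ℕ} {path : ℕ → V} {f : V → ℝ} (h0 : 0 ≤ f)
    (h1 : f ≤ 1) {S : Set (ℕ → V)}
    (hS : ∀ y, μ x (pathCylinder (m + 1) (Function.update path (m + 1) y) ∩ S) ≤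
      μ x (pathCylinder (m + 1) (Function.update path (m + 1) y)) * ENNReal.ofReal (f y)) :
    μ x (pathCylinder m path ∩ S) ≤
      μ x (pathCylinder m path) * ENNReal.ofReal (kernelMulVec P f (path m)) :=
  calc μ x (pathCylinder m path ∩ S)
      ≤ ∑' y, μ x (pathCylinder (m + 1) (Function.update path (m + 1) y) ∩ S) :=
        measure_pathCylinder_inter_le_tsum _ m path S
    _ ≤ ∑' y, μ x (pathCylinder m path) * ENNReal.ofReal (P (path m) y * f y) := by
        refine ENNReal.tsum_le_tsum fun y => (hS y).trans_eq ?_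
        rw [hμ.measure_pathCylinder_succ, mul_assoc, ENNReal.ofReal_mul (hP.1 _ _)]
    _ = μ x (pathCylinder m path) * ENNReal.ofReal (kernelMulVec P f (path m)) := by
        rw [ENNReal.tsum_mul_left, kernelMulVec, ENNReal.ofReal_tsum_of_nonneg
          (fun y => mul_nonneg (hP.1 _ y) (h0 y)) (hP.summable_mul h0 h1 _)]

lemma measure_pathCylinder_inter_visitsIcc_le [Countable V] (hμ : IsMarkovPathLaw P μ)
    (hP : IsTransitionKernel P) (x : V) (n m : ℕ) (path : ℕ → V) :
    μ x (pathCylinder m path ∩ visitsIcc A m (m + n)) ≤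
      μ x (pathCylinder m path) * ENNReal.ofReal (hitProb P A n (path m)) := by
  by_cases hz : path m ∈ A
  · rw [hitProb_of_mem n hz, ENNReal.ofReal_one, mul_one]
    exact measure_mono Set.inter_subset_left
  have hstart : pathCylinder m path ∩ visitsIcc A m (m + n) ⊆ visitsIcc A (m + 1) (m + n) := by
    rintro ω ⟨hω, t, ⟨hmt, htn⟩, htA⟩
    refine ⟨t, ⟨lt_of_le_of_ne hmt fun hmt => hz ?_, htn⟩, htA⟩
    rwa [← hω m le_rfl, hmt]
  cases n with
  | zero =>
    have hempty : pathCylinder m path ∩ visitsIcc A m (m + 0) = ∅ :=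
      Set.eq_empty_of_subset_empty fun ω hω => by
        obtain ⟨t, ⟨ht1, ht2⟩, -⟩ := hstart hω
        omega
    rw [hempty, measure_empty]
    exact zero_le
  | succ n =>
    have hsucc : hitProb P A (n + 1) (path m) = kernelMulVec P (hitProb P A n) (path m) := by
      simp [hitProb, hz]
    rw [hsucc]
    refine (measure_mono (Set.subset_inter Set.inter_subset_left hstart)).trans ?_
    refine hμ.measure_pathCylinder_inter_le_kernelMulVec hP (hP.hitProb_nonneg n)
      (hP.hitProb_le_one n) fun y => ?_
    rw [← Nat.add_assoc, Nat.add_right_comm m n 1]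
    simpa only [Function.update_self] using
      hμ.measure_pathCylinder_inter_visitsIcc_le hP x n (m + 1) (Function.update path (m + 1) y)

lemma measure_visitsIcc_le [Countable V] (hμ : IsMarkovPathLaw P μ) (hP : IsTransitionKernel P)
    (x : V) (n : ℕ) :
    μ x (visitsIcc A 1 (1 + n)) ≤ ENNReal.ofReal (kernelMulVec P (hitProb P A n) x) := by
  have := hμ.1 x
  rw [← measure_inter_conull (hμ.measure_compl_pathCylinder_zero x), Set.inter_comm]
  calc μ x ((pathCylinder 0 fun _ => x) ∩ visitsIcc A 1 (1 + n))
      ≤ μ x (pathCylinder 0 fun _ => x) * ENNReal.ofReal (kernelMulVec P (hitProb P A n) x) :=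
        hμ.measure_pathCylinder_inter_le_kernelMulVec hP (hP.hitProb_nonneg n)
          (hP.hitProb_le_one n) fun y => by
            simpa only [Function.update_self] using
              hμ.measure_pathCylinder_inter_visitsIcc_le hP x n 1 (Function.update _ 1 y)
    _ ≤ ENNReal.ofReal (kernelMulVec P (hitProb P A n) x) :=
        mul_le_of_le_one_left' prob_le_one

lemma measure_returns_le [Countable V] (hμ : IsMarkovPathLaw P μ) (hP : IsTransitionKernel P)
    (x : V) : μ x {ω | ∃ t, 0 < t ∧ ω t ∈ A} ≤ ENNReal.ofReal (returnProb P A x) := by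
  have hunion : {ω : ℕ → V | ∃ t, 0 < t ∧ ω t ∈ A} = ⋃ n, visitsIcc A 1 (1 + n) := by
    ext ω
    simp only [Set.mem_ofPred_eq, Set.mem_iUnion, visitsIcc, Set.mem_Icc]
    constructor
    · rintro ⟨t, ht, htA⟩
      exact ⟨t, t, ⟨ht, by omega⟩, htA⟩
    · rintro ⟨-, t, ⟨ht, -⟩, htA⟩
      exact ⟨t, ht, htA⟩
  have hmono : Monotone fun n => visitsIcc (V := V) A 1 (1 + n) :=
    fun _ _ hmn _ ⟨t, ⟨ht1, ht2⟩, htA⟩ => ⟨t, ⟨ht1, by omega⟩, htA⟩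
  rw [hunion, hmono.measure_iUnion]
  exact iSup_le fun n => (hμ.measure_visitsIcc_le hP x n).trans <| ENNReal.ofReal_le_ofReal <|
    (hP.monotone_kernelMulVec_hitProb x).ge_of_tendsto (hP.tendsto_returnProb x) n

lemma ofReal_one_sub_returnProb_le [Countable V] (hμ : IsMarkovPathLaw P μ)
    (hP : IsTransitionKernel P) (x : V) :
    ENNReal.ofReal (1 - returnProb P A x) ≤ μ x {ω | ∀ t, 0 < t → ω t ∉ A} := by
  have hcompl :
      {ω : ℕ → V | ∀ t, 0 < t → ω t ∉ A}ᶜ = {ω | ∃ t, 0 < t ∧ ω t ∈ A} := by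
    ext ω
    simp
  have h1 := measure_univ_le_add_compl (μ := μ x) {ω : ℕ → V | ∀ t, 0 < t → ω t ∉ A}
  rw [hcompl, (hμ.1 x).measure_univ] at h1
  rw [ENNReal.ofReal_sub _ (hP.returnProb_nonneg x), ENNReal.ofReal_one]
  exact tsub_le_iff_right.2 (h1.trans (add_le_add le_rfl (hμ.measure_returns_le hP x)))

end IsMarkovPathLaw

theorem stmt_0_general {V : Type*} [Countable V] [MeasurableSpace V]
    (P : V → V → ℝ) (π : V → ℝ) (μ : V → Measure (ℕ → V)) (lam : ℝ)
    (hP : IsTransitionKernel P) (hrev : IsReversing P π)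
    (hμ : IsMarkovPathLaw P μ)
    (hlam : 0 < lam) (hgap : SpectralGapLB P π lam)
    (A : Set V) (hA : A.Nonempty)
    (hAfin : Summable (fun x => if x ∈ A then π x else 0)) :
    ENNReal.ofReal lam ≤
      (∑' x : V, (if x ∈ A then ENNReal.ofReal (π x) else 0) *
          μ x {ω | ∀ t, 0 < t → ω t ∉ A}) /
        ENNReal.ofReal (∑' x : V, if x ∈ A then π x else 0) := by
  obtain ⟨v, hv⟩ := hA
  have hmass : 0 < ∑' x, if x ∈ A then π x else 0 :=
    (hrev.1 v).trans_le <| by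
      simpa [hv] using hAfin.le_tsum v fun x _ => by split_ifs <;> simp [(hrev.1 x).le]
  have hesc x := ite_mul_one_sub_mem_Icc (A := A) (hrev.1 x).le
    (hP.returnProb_nonneg (A := A) x) (hP.returnProb_le_one x)
  rw [ENNReal.le_div_iff_mul_le (Or.inl (ENNReal.ofReal_pos.2 hmass).ne')
    (Or.inl ENNReal.ofReal_ne_top), ← ENNReal.ofReal_mul hlam.le]
  calc ENNReal.ofReal (lam * ∑' x, if x ∈ A then π x else 0)
      ≤ ENNReal.ofReal (∑' x, if x ∈ A then π x * (1 - returnProb P A x) else 0) :=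
        ENNReal.ofReal_le_ofReal (hgap.mul_tsum_le_returnProb hP hrev hlam.le hAfin)
    _ = ∑' x, ENNReal.ofReal (if x ∈ A then π x * (1 - returnProb P A x) else 0) :=
        ENNReal.ofReal_tsum_of_nonneg (fun x => (hesc x).1)
          (hAfin.of_nonneg_of_le (fun x => (hesc x).1) fun x => (hesc x).2)
    _ ≤ _ := ENNReal.tsum_le_tsum fun x => by
        split_ifs
        · rw [ENNReal.ofReal_mul (hrev.1 x).le]
          exact mul_le_mul_right (hμ.ofReal_one_sub_returnProb_le hP x) _
        · simp

open scoped Classical in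
/-- for a reversible irreducible Markov chain on a countable state space `V` with
stationary measure `π` of infinite total mass, whose spectral gap in `ℓ²(π)` is at least
`lam > 0`, and any nonempty `A ⊆ V` with `π(A) < ∞`, the chain started from the normalized
restriction `π_A` of `π` to `A` never returns to `A` after time `0` with probability
at least `lam`. -/
theorem stmt_0 {V : Type*} [Countable V] [MeasurableSpace V]
    (P : V → V → ℝ) (π : V → ℝ) (μ : V → Measure (ℕ → V)) (lam : ℝ)
    (hP : IsTransitionKernel P) (hirr : KernelIrreducible P) (hrev : IsReversing P π)
    (hinf : ¬ Summable π) (hμ : IsMarkovPathLaw P μ)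
    (hlam : 0 < lam) (hgap : SpectralGapLB P π lam)
    (A : Set V) (hA : A.Nonempty)
    (hAfin : Summable (fun x => if x ∈ A then π x else 0)) :
    ENNReal.ofReal lam ≤
      (∑' x : V, (if x ∈ A then ENNReal.ofReal (π x) else 0) *
          μ x {ω | ∀ t, 0 < t → ω t ∉ A}) /
        ENNReal.ofReal (∑' x : V, if x ∈ A then π x else 0) :=
  stmt_0_general P π μ lam hP hrev hμ hlam hgap A hA hAfin
end

section
/- Under the hypotheses of the escape-probability lemma, for any nonempty A ⊆ V with π(A) < ∞ and any set B ⊆ V disjoint from A such that V∖(A∪B) is finite, if τ⁺ = min{t > 0 : X_t ∈ A∪B}, then P_{π_A}(X_{τ⁺} ∈ B) ≥ λ₁. -/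
/-!
Let `S = (A ∪ B)ᶜ` and let `φ(x)` be the probability, from `x`, that the chain enters `A` when it
first leaves `S`, or never leaves `S`. The test function `f = 𝟙_A + 𝟙_S φ` satisfies `P f = φ`,
so `⟨f, (I - P) f⟩_π = ∑_{x ∈ A} π(x) (1 - φ(x))` while `⟨f, f⟩_π ≥ π(A)`; the spectral gap gives
`λ π(A) ≤ ∑_{x ∈ A} π(x) (1 - φ(x))`, and `1 - φ(x)` is at most the probability of escaping to `B`
from `x`. Here `φ` is the decreasing limit of `φ₀ = 1`, `φₙ₊₁ = P(·, A) + Q φₙ` with `Q` the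
kernel killed outside `S`, and the escape bound `P_x(escape) ≥ 1 - φₙ(x)` comes from covering the
complement of the escape event by cylinders of total mass `φₙ(x)`.
-/

open MeasureTheory

noncomputable section

namespace EscapeProbability

open Filter Topology
open scoped ENNReal

variable {V : Type*}

def killedOp (P : V → V → ℝ) (S : Finset V) (u : V → ℝ) (y : V) : ℝ :=
  ∑ z ∈ S, P y z * u z

def stepProb (P : V → V → ℝ) (A : Set V) (y : V) : ℝ :=
  ∑' z, A.indicator (P y) z

/-- `entryBound P A S n x` is the probability, from `x`, that within `n` steps the chain enters
`A` when it first leaves `S`, or has not left `S` yet. -/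
def entryBound (P : V → V → ℝ) (A : Set V) (S : Finset V) : ℕ → V → ℝ
  | 0 => 1
  | n + 1 => stepProb P A + killedOp P S (entryBound P A S n)

def entryLimit (P : V → V → ℝ) (A : Set V) (S : Finset V) (y : V) : ℝ :=
  ⨅ n, entryBound P A S n y

variable {P : V → V → ℝ}

section Analytic

variable {A : Set V} {S : Finset V}

lemma killedOp_mono (hP : ∀ x y, 0 ≤ P x y) {u v : V → ℝ} (huv : u ≤ v) :
    killedOp P S u ≤ killedOp P S v := fun y =>
  Finset.sum_le_sum fun z _ => mul_le_mul_of_nonneg_left (huv z) (hP y z)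

lemma killedOp_nonneg (hP : ∀ x y, 0 ≤ P x y) {u : V → ℝ} (hu : 0 ≤ u) :
    0 ≤ killedOp P S u :=
  fun y => Finset.sum_nonneg fun z _ => mul_nonneg (hP y z) (hu z)

lemma hasSum_killedOp (u : V → ℝ) (y : V) :
    HasSum ((S : Set V).indicator fun z => P y z * u z) (killedOp P S u y) := by
  have h := hasSum_sum_of_ne_finset_zero (f := (S : Set V).indicator fun z => P y z * u z)
    (L := .unconditional V) (s := S) fun z hz => Set.indicator_of_notMem (mt Finset.mem_coe.1 hz) _
  rwa [Finset.sum_congr rfl fun z hz => Set.indicator_of_mem (Finset.mem_coe.2 hz) _] at h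

lemma summable_indicator (hP : IsTransitionKernel P) (A : Set V) (y : V) :
    Summable (A.indicator (P y)) :=
  (hP.2 y).summable.indicator A

lemma stepProb_nonneg (hP : IsTransitionKernel P) : 0 ≤ stepProb P A :=
  fun _ => tsum_nonneg fun z => Set.indicator_nonneg (fun z _ => hP.1 _ z) z

lemma ofReal_stepProb (hP : IsTransitionKernel P) (y : V) :
    ENNReal.ofReal (stepProb P A y) = ∑' z, ENNReal.ofReal (A.indicator (P y) z) :=
  ENNReal.ofReal_tsum_of_nonneg (Set.indicator_nonneg fun z _ => hP.1 _ z)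
    (summable_indicator hP A y)

lemma hasSum_mul_indicator_add_indicator (hP : IsTransitionKernel P) (u : V → ℝ) (y : V) :
    HasSum (fun z => P y z * (A.indicator 1 z + (S : Set V).indicator u z))
      (stepProb P A y + killedOp P S u y) := by
  have hsplit : (fun z => P y z * (A.indicator 1 z + (S : Set V).indicator u z)) =
      A.indicator (P y) + (S : Set V).indicator fun z => P y z * u z := funext fun z => by
    by_cases hzA : z ∈ A <;> by_cases hzS : z ∈ (S : Set V) <;> simp [hzA, hzS, mul_add]
  rw [hsplit]
  exact (summable_indicator hP A y).hasSum.add (hasSum_killedOp u y)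

lemma stepProb_add_killedOp_one_le (hP : IsTransitionKernel P) (hAS : ∀ z ∈ S, z ∉ A) :
    stepProb P A + killedOp P S 1 ≤ 1 := fun y =>
  hasSum_le (fun z => mul_le_of_le_one_right (hP.1 y z) (by
      by_cases hzS : z ∈ (S : Set V)
      · simp [hzS, hAS z hzS]
      · by_cases hzA : z ∈ A <;> simp [hzS, hzA]))
    (hasSum_mul_indicator_add_indicator hP 1 y) (hP.2 y)

lemma entryBound_nonneg (hP : IsTransitionKernel P) : ∀ n, 0 ≤ entryBound P A S n
  | 0 => zero_le_one
  | n + 1 => add_nonneg (stepProb_nonneg hP) (killedOp_nonneg hP.1 (entryBound_nonneg hP n))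

lemma entryBound_antitone (hP : IsTransitionKernel P) (hAS : ∀ z ∈ S, z ∉ A) :
    Antitone (entryBound P A S) := by
  refine antitone_nat_of_succ_le fun n => ?_
  induction n with
  | zero => exact stepProb_add_killedOp_one_le hP hAS
  | succ n ih => exact add_le_add le_rfl (killedOp_mono hP.1 ih)

lemma tendsto_entryBound (hP : IsTransitionKernel P) (hAS : ∀ z ∈ S, z ∉ A) (y : V) :
    Tendsto (fun n => entryBound P A S n y) atTop (𝓝 (entryLimit P A S y)) :=
  tendsto_atTop_ciInf (fun _ _ hmn => entryBound_antitone hP hAS hmn y)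
    ⟨0, Set.forall_mem_range.2 fun n => entryBound_nonneg hP n y⟩

lemma entryLimit_nonneg (hP : IsTransitionKernel P) (hAS : ∀ z ∈ S, z ∉ A) :
    0 ≤ entryLimit P A S := fun y =>
  ge_of_tendsto' (tendsto_entryBound hP hAS y) fun n => entryBound_nonneg hP n y

lemma entryLimit_le_one (hP : IsTransitionKernel P) (hAS : ∀ z ∈ S, z ∉ A) :
    entryLimit P A S ≤ 1 := fun y =>
  le_of_tendsto' (tendsto_entryBound hP hAS y) fun n => entryBound_antitone hP hAS n.zero_le y

lemma entryLimit_eq (hP : IsTransitionKernel P) (hAS : ∀ z ∈ S, z ∉ A) :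
    entryLimit P A S = stepProb P A + killedOp P S (entryLimit P A S) := by
  funext y
  refine tendsto_nhds_unique ((tendsto_entryBound hP hAS y).comp (tendsto_add_atTop_nat 1)) ?_
  exact tendsto_const_nhds.add <| tendsto_finsetSum _ fun z _ =>
    (tendsto_entryBound hP hAS z).const_mul _

end Analytic

section Paths

variable {A : Set V} {S : Finset V}

def pathWeight (P : V → V → ℝ) : V → List V → ℝ
  | _, [] => 1
  | x, y :: l => P x y * pathWeight P y l

/-- The list `[ω 1, …, ω k]` of a path `ω` that, within `n` steps, either enters `A` after
staying in `S`, or stays in `S` for all `n` steps. -/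
def IsNonEscapePrefix (A : Set V) (S : Finset V) : ℕ → List V → Prop
  | 0, l => l = []
  | _ + 1, [] => False
  | n + 1, y :: l => (y ∈ A ∧ l = []) ∨ (y ∈ S ∧ IsNonEscapePrefix A S n l)

def prefixMass (P : V → V → ℝ) (A : Set V) (S : Finset V) (n : ℕ) (x : V) :
    List V → ℝ≥0∞ :=
  {l | IsNonEscapePrefix A S n l}.indicator fun l => ENNReal.ofReal (pathWeight P x l)

def cylinder (x : V) (l : List V) : Set (ℕ → V) :=
  {ω | ∀ i ≤ l.length, ω i = (x :: l).getD i x}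

def escapeEvent (A B : Set V) : Set (ℕ → V) :=
  {ω | ∃ t, 0 < t ∧ ω t ∈ B ∧ ∀ s, 0 < s → s < t → ω s ∉ A ∪ B}

lemma pathWeight_eq_prod (x d : V) (l : List V) :
    pathWeight P x l =
      ∏ i ∈ Finset.range l.length, P ((x :: l).getD i d) ((x :: l).getD (i + 1) d) := by
  induction l generalizing x with
  | nil => simp [pathWeight]
  | cons y l ih =>
    rw [pathWeight, ih y, List.length_cons, Finset.prod_range_succ', mul_comm]
    rfl

lemma tsum_prefixMass_zero (x : V) : ∑' l, prefixMass P A S 0 x l = 1 := by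
  rw [prefixMass, show {l | IsNonEscapePrefix A S 0 l} = {[]} from rfl]
  simp [Set.indicator_apply, pathWeight]

lemma prefixMass_cons_le (hP : ∀ x y, 0 ≤ P x y) (n : ℕ) (x y : V) (t : List V) :
    prefixMass P A S (n + 1) x (y :: t) ≤
      (if t = [] then ENNReal.ofReal (A.indicator (P x) y) else 0) +
        (S : Set V).indicator (fun y => ENNReal.ofReal (P x y) * prefixMass P A S n y t) y := by
  unfold prefixMass
  by_cases hAt : y ∈ A ∧ t = []
  · obtain ⟨hyA, rfl⟩ := hAt
    rw [Set.indicator_of_mem (show [y] ∈ {l | IsNonEscapePrefix A S (n + 1) l} from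
      Or.inl ⟨hyA, rfl⟩), if_pos rfl, Set.indicator_of_mem hyA, pathWeight, pathWeight, mul_one]
    exact le_self_add
  by_cases hSt : y ∈ S ∧ IsNonEscapePrefix A S n t
  · rw [Set.indicator_of_mem (show y :: t ∈ {l | IsNonEscapePrefix A S (n + 1) l} from
      Or.inr hSt), Set.indicator_of_mem (Finset.mem_coe.2 hSt.1),
      Set.indicator_of_mem (show t ∈ {l | IsNonEscapePrefix A S n l} from hSt.2), pathWeight,
      ENNReal.ofReal_mul (hP x y)]
    exact le_add_self
  · rw [Set.indicator_of_notMem (show y :: t ∉ {l | IsNonEscapePrefix A S (n + 1) l} by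
      rintro (h | h) <;> contradiction)]
    exact zero_le

lemma tsum_prefixMass_succ (n : ℕ) (x : V) :
    ∑' l, prefixMass P A S (n + 1) x l = ∑' y, ∑' t, prefixMass P A S (n + 1) x (y :: t) := by
  have hsupp : Function.support (prefixMass P A S (n + 1) x) ⊆
      Set.range fun p : V × List V => p.1 :: p.2 := by
    rintro (_ | ⟨y, t⟩) hl
    · exact absurd (Set.indicator_of_notMem
        (show ([] : List V) ∉ {l | IsNonEscapePrefix A S (n + 1) l} from id) _) hl
    · exact ⟨(y, t), rfl⟩
  rw [← Function.Injective.tsum_eq (fun _ _ h => Prod.ext (List.cons.inj h).1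
    (List.cons.inj h).2) hsupp]
  exact ENNReal.tsum_prod (f := fun y t => prefixMass P A S (n + 1) x (y :: t))

lemma ofReal_entryBound_succ (hP : IsTransitionKernel P) (n : ℕ) (x : V) :
    ENNReal.ofReal (entryBound P A S (n + 1) x) =
      ∑' y, ENNReal.ofReal (A.indicator (P x) y) +
        ∑ y ∈ S, ENNReal.ofReal (P x y) * ENNReal.ofReal (entryBound P A S n y) := by
  have hnn := entryBound_nonneg hP (A := A) (S := S) n
  rw [entryBound, Pi.add_apply, ENNReal.ofReal_add (stepProb_nonneg hP x)
    (killedOp_nonneg hP.1 hnn x), ofReal_stepProb hP, killedOp,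
    ENNReal.ofReal_sum_of_nonneg fun y _ => mul_nonneg (hP.1 x y) (hnn y)]
  simp only [ENNReal.ofReal_mul (hP.1 x _)]

lemma tsum_prefixMass_le (hP : IsTransitionKernel P) (n : ℕ) (x : V) :
    ∑' l, prefixMass P A S n x l ≤ ENNReal.ofReal (entryBound P A S n x) := by
  induction n generalizing x with
  | zero => simp [tsum_prefixMass_zero, entryBound]
  | succ n ih =>
    have hy : ∀ y, ∑' t, prefixMass P A S (n + 1) x (y :: t) ≤
        ENNReal.ofReal (A.indicator (P x) y) + (S : Set V).indicator
          (fun y => ENNReal.ofReal (P x y) * ENNReal.ofReal (entryBound P A S n y)) y := by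
      intro y
      refine (ENNReal.tsum_le_tsum (prefixMass_cons_le hP.1 n x y)).trans ?_
      simp only [ENNReal.tsum_add, tsum_ite_eq]
      by_cases hyS : y ∈ (S : Set V)
      · simp only [Set.indicator_of_mem hyS, ENNReal.tsum_mul_left]
        exact add_le_add le_rfl (mul_le_mul_right (ih y) _)
      · simp [Set.indicator_of_notMem hyS]
    calc _ = ∑' y, ∑' t, prefixMass P A S (n + 1) x (y :: t) := tsum_prefixMass_succ n x
      _ ≤ _ := ENNReal.tsum_le_tsum hy
      _ = ENNReal.ofReal (entryBound P A S (n + 1) x) := by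
        rw [ENNReal.tsum_add, ofReal_entryBound_succ hP,
          tsum_eq_sum (s := S) fun y hy => Set.indicator_of_notMem (mt Finset.mem_coe.1 hy) _]
        exact congrArg _ (Finset.sum_congr rfl fun y hy => Set.indicator_of_mem hy _)

lemma mem_cylinder_cons {ω : ℕ → V} {l : List V}
    (hω : (fun i => ω (i + 1)) ∈ cylinder (ω 1) l) : ω ∈ cylinder (ω 0) (ω 1 :: l) := by
  rintro (_ | j) hj
  · rfl
  · have hj' : j < (ω 1 :: l).length := hj
    exact (hω j (Nat.le_of_lt_succ hj)).trans
      (by simp only [List.getD_cons_succ, List.getD_eq_getElem _ _ hj'])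

lemma shift_notMem_escapeEvent {B : Set V} {ω : ℕ → V} (h1 : ω 1 ∉ A ∪ B)
    (hω : ω ∉ escapeEvent A B) : (fun i => ω (i + 1)) ∉ escapeEvent A B := by
  rintro ⟨t, ht, htB, hbefore⟩
  refine hω ⟨t + 1, t.succ_pos, htB, fun s hs hst => ?_⟩
  obtain _ | _ | s := s
  · exact absurd hs (lt_irrefl 0)
  · exact h1
  · exact hbefore (s + 1) s.succ_pos (by omega)

lemma exists_isNonEscapePrefix {B : Set V} (hS : ∀ z, z ∈ S ↔ z ∉ A ∪ B) (n : ℕ)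
    (ω : ℕ → V) (hω : ω ∉ escapeEvent A B) :
    ∃ l, IsNonEscapePrefix A S n l ∧ ω ∈ cylinder (ω 0) l := by
  induction n generalizing ω with
  | zero => exact ⟨[], rfl, fun i hi => by rw [Nat.le_zero.1 hi]; rfl⟩
  | succ n ih =>
    by_cases h1A : ω 1 ∈ A
    · refine ⟨[ω 1], Or.inl ⟨h1A, rfl⟩, fun i (hi : i ≤ 1) => ?_⟩
      interval_cases i <;> rfl
    by_cases h1B : ω 1 ∈ B
    · exact absurd ⟨1, one_pos, h1B, fun s hs hs1 => absurd hs1 (by omega)⟩ hω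
    have h1 : ω 1 ∉ A ∪ B := by simp [h1A, h1B]
    obtain ⟨l, hl, hωl⟩ := ih _ (shift_notMem_escapeEvent h1 hω)
    exact ⟨ω 1 :: l, Or.inr ⟨(hS _).2 h1, hl⟩, mem_cylinder_cons hωl⟩

end Paths

section PathLaw

variable [MeasurableSpace V] {μ : V → Measure (ℕ → V)} {A B : Set V} {S : Finset V}

lemma measure_cylinder (hP : ∀ x y, 0 ≤ P x y) (hμ : IsMarkovPathLaw P μ) (x : V)
    (l : List V) : μ x (cylinder x l) = ENNReal.ofReal (pathWeight P x l) := by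
  rw [cylinder, hμ.2 x l.length, pathWeight_eq_prod x x,
    ENNReal.ofReal_prod_of_nonneg fun i _ => hP _ _]
  simp

lemma measure_ne_start [Countable V] (hμ : IsMarkovPathLaw P μ) (x : V) :
    μ x {ω | ω 0 ≠ x} = 0 := by
  have hsub : {ω | ω 0 ≠ x} ⊆ ⋃ y : {y // y ≠ x}, {ω : ℕ → V | ∀ i ≤ 0, ω i = y} :=
    fun ω hω => Set.mem_iUnion.2 ⟨⟨ω 0, hω⟩, fun i hi => by rw [Nat.le_zero.1 hi]⟩
  exact measure_mono_null hsub
    (measure_iUnion_null fun y => by simpa [y.2] using hμ.2 x 0 fun _ => y.1)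

lemma measure_iUnion_cylinder_le [Countable V] (hP : IsTransitionKernel P)
    (hμ : IsMarkovPathLaw P μ) (n : ℕ) (x : V) :
    μ x (⋃ l : {l // IsNonEscapePrefix A S n l}, cylinder x l) ≤
      ENNReal.ofReal (entryBound P A S n x) :=
  calc _ ≤ ∑' l : {l // IsNonEscapePrefix A S n l}, μ x (cylinder x l) := measure_iUnion_le _
    _ = ∑' l, prefixMass P A S n x l := by
        simp_rw [measure_cylinder hP.1 hμ]
        exact tsum_subtype {l | IsNonEscapePrefix A S n l}
          fun l => ENNReal.ofReal (pathWeight P x l)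
    _ ≤ _ := tsum_prefixMass_le hP n x

/-- The cylinders need not be measurable, so only subadditivity is available: the complement of
the escape event is covered by cylinders of total mass `entryBound`. -/
lemma one_le_measure_escapeEvent_add [Countable V] (hP : IsTransitionKernel P)
    (hμ : IsMarkovPathLaw P μ) (hS : ∀ z, z ∈ S ↔ z ∉ A ∪ B) (n : ℕ) (x : V) :
    1 ≤ μ x (escapeEvent A B) + ENNReal.ofReal (entryBound P A S n x) := by
  have hcover : (escapeEvent A B)ᶜ ⊆
      {ω | ω 0 ≠ x} ∪ ⋃ l : {l // IsNonEscapePrefix A S n l}, cylinder x l := by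
    intro ω hω
    by_cases h0 : ω 0 = x
    · obtain ⟨l, hl, hωl⟩ := exists_isNonEscapePrefix hS n ω hω
      exact Or.inr (Set.mem_iUnion.2 ⟨⟨l, hl⟩, h0 ▸ hωl⟩)
    · exact Or.inl h0
  have := hμ.1 x
  calc 1 = μ x (escapeEvent A B ∪ (escapeEvent A B)ᶜ) := by simp
    _ ≤ μ x (escapeEvent A B) + μ x (escapeEvent A B)ᶜ := measure_union_le _ _
    _ ≤ μ x (escapeEvent A B) + (μ x {ω | ω 0 ≠ x} +
          μ x (⋃ l : {l // IsNonEscapePrefix A S n l}, cylinder x l)) :=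
        add_le_add le_rfl ((measure_mono hcover).trans (measure_union_le _ _))
    _ ≤ _ := by
        rw [measure_ne_start hμ x, zero_add]
        exact add_le_add le_rfl (measure_iUnion_cylinder_le hP hμ n x)

lemma ofReal_one_sub_entryLimit_le [Countable V] (hP : IsTransitionKernel P)
    (hμ : IsMarkovPathLaw P μ) (hS : ∀ z, z ∈ S ↔ z ∉ A ∪ B) (x : V) :
    ENNReal.ofReal (1 - entryLimit P A S x) ≤ μ x (escapeEvent A B) := by
  have hAS : ∀ z ∈ S, z ∉ A := fun z hz hzA => (hS z).1 hz (Or.inl hzA)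
  have hlim : 1 ≤ μ x (escapeEvent A B) + ENNReal.ofReal (entryLimit P A S x) :=
    ge_of_tendsto' (((ENNReal.continuous_ofReal.tendsto _).comp
      (tendsto_entryBound hP hAS x)).const_add _) (one_le_measure_escapeEvent_add hP hμ hS · x)
  rw [ENNReal.ofReal_sub _ (entryLimit_nonneg hP hAS x), ENNReal.ofReal_one]
  exact tsub_le_iff_right.2 hlim

lemma ofReal_tsum_indicator_le_tsum_measure_escapeEvent [Countable V] {π : V → ℝ}
    (hP : IsTransitionKernel P) (hμ : IsMarkovPathLaw P μ) (hπ : ∀ x, 0 ≤ π x)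
    (hS : ∀ z, z ∈ S ↔ z ∉ A ∪ B) (hAfin : Summable (A.indicator π)) :
    ENNReal.ofReal (∑' x, A.indicator (fun x => π x * (1 - entryLimit P A S x)) x) ≤
      ∑' x, A.indicator (fun x => ENNReal.ofReal (π x)) x * μ x (escapeEvent A B) := by
  have hAS : ∀ z ∈ S, z ∉ A := fun z hz hzA => (hS z).1 hz (Or.inl hzA)
  have hnonneg : ∀ x, 0 ≤ A.indicator (fun x => π x * (1 - entryLimit P A S x)) x :=
    Set.indicator_nonneg fun x _ => mul_nonneg (hπ x) (sub_nonneg.2 (entryLimit_le_one hP hAS x))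
  rw [ENNReal.ofReal_tsum_of_nonneg hnonneg (hAfin.of_nonneg_of_le hnonneg fun x =>
    Set.indicator_le_indicator (mul_le_of_le_one_right (hπ x)
      (sub_le_self _ (entryLimit_nonneg hP hAS x))))]
  refine ENNReal.tsum_le_tsum fun x => ?_
  by_cases hx : x ∈ A
  · rw [Set.indicator_of_mem hx, Set.indicator_of_mem hx, ENNReal.ofReal_mul (hπ x)]
    exact mul_le_mul_right (ofReal_one_sub_entryLimit_le hP hμ hS x) _
  · simp [hx]

end PathLaw

section SpectralGap

variable {π : V → ℝ} {lam : ℝ} {A : Set V} {S : Finset V}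

/-- Tested on `f = 𝟙_A + 𝟙_S ⬝ entryLimit`, for which `P f = entryLimit`, the spectral gap
only sees `A`. -/
lemma SpectralGapLB.mul_tsum_le_tsum_one_sub_entryLimit (hgap : SpectralGapLB P π lam)
    (hP : IsTransitionKernel P) (hπ : ∀ x, 0 < π x) (hlam : 0 ≤ lam) (hAS : ∀ z ∈ S, z ∉ A)
    (hAfin : Summable (A.indicator π)) :
    lam * ∑' x, A.indicator π x ≤
      ∑' x, A.indicator (fun x => π x * (1 - entryLimit P A S x)) x := by
  set φ := entryLimit P A S
  set f : V → ℝ := A.indicator 1 + (S : Set V).indicator φ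
  have hPf : ∀ y, ∑' z, P y z * f z = φ y := fun y =>
    (hasSum_mul_indicator_add_indicator hP φ y).tsum_eq.trans
      (congrFun (entryLimit_eq hP hAS) y).symm
  have hcases : ∀ y, (y ∈ A ∧ y ∉ (S : Set V) ∧ f y = 1) ∨
      (y ∉ A ∧ y ∈ (S : Set V) ∧ f y = φ y) ∨ (y ∉ A ∧ y ∉ (S : Set V) ∧ f y = 0) := by
    intro y
    by_cases hyA : y ∈ A
    · have hyS : y ∉ (S : Set V) := fun hyS => hAS y hyS hyA
      exact Or.inl ⟨hyA, hyS, by simp [f, hyA, hyS]⟩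
    · by_cases hyS : y ∈ (S : Set V)
      · exact Or.inr (Or.inl ⟨hyA, hyS, by simp [f, hyA, hyS]⟩)
      · exact Or.inr (Or.inr ⟨hyA, hyS, by simp [f, hyA, hyS]⟩)
  have hf2 : ∀ y, π y * f y ^ 2 =
      A.indicator π y + (S : Set V).indicator (fun y => π y * φ y ^ 2) y := fun y => by
    rcases hcases y with ⟨hA, hS, hf⟩ | ⟨hA, hS, hf⟩ | ⟨hA, hS, hf⟩ <;> simp [hA, hS, hf]
  have hform : ∀ y, π y * f y * (f y - ∑' z, P y z * f z) =
      A.indicator (fun x => π x * (1 - φ x)) y := fun y => by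
    rw [hPf]
    rcases hcases y with ⟨hA, -, hf⟩ | ⟨hA, -, hf⟩ | ⟨hA, -, hf⟩ <;> simp [hA, hf]
  have hsum : Summable fun y => π y * f y ^ 2 := by
    simp_rw [hf2]
    exact hAfin.add (summable_of_ne_finset_zero (s := S) fun y hy =>
      Set.indicator_of_notMem (mt Finset.mem_coe.1 hy) _)
  calc lam * ∑' x, A.indicator π x ≤ lam * ∑' y, π y * f y ^ 2 := by
        refine mul_le_mul_of_nonneg_left (hAfin.tsum_le_tsum (fun y => ?_) hsum) hlam
        rw [hf2]
        exact le_add_of_nonneg_right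
          (Set.indicator_nonneg (fun y _ => mul_nonneg (hπ y).le (sq_nonneg _)) y)
    _ ≤ ∑' y, π y * f y * (f y - ∑' z, P y z * f z) := hgap f hsum
    _ = _ := tsum_congr hform

end SpectralGap

end EscapeProbability

end

open EscapeProbability

open scoped Classical in
theorem stmt_1_general {V : Type*} [Countable V] [MeasurableSpace V]
    (P : V → V → ℝ) (π : V → ℝ) (μ : V → Measure (ℕ → V)) (lam : ℝ)
    (hP : IsTransitionKernel P) (hrev : IsReversing P π)
    (hμ : IsMarkovPathLaw P μ)
    (hlam : 0 < lam) (hgap : SpectralGapLB P π lam)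
    (A B : Set V) (hA : A.Nonempty)
    (hAfin : Summable (fun x => if x ∈ A then π x else 0))
    (hcofin : (A ∪ B)ᶜ.Finite) :
    ENNReal.ofReal lam ≤
      (∑' x : V, (if x ∈ A then ENNReal.ofReal (π x) else 0) *
          μ x {ω | ∃ t, 0 < t ∧ ω t ∈ B ∧ ∀ s, 0 < s → s < t → ω s ∉ A ∪ B}) /
        ENNReal.ofReal (∑' x : V, if x ∈ A then π x else 0) := by
  set S := hcofin.toFinset
  have hS : ∀ z, z ∈ S ↔ z ∉ A ∪ B := fun z => hcofin.mem_toFinset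
  have hAS : ∀ z ∈ S, z ∉ A := fun z hz hzA => (hS z).1 hz (Or.inl hzA)
  have hπ := hrev.1
  rw [show (fun x => if x ∈ A then π x else 0) = A.indicator π from rfl] at hAfin ⊢
  have hπA : 0 < ∑' x, A.indicator π x :=
    hAfin.tsum_pos (Set.indicator_nonneg fun x _ => (hπ x).le) hA.some
      (by rw [Set.indicator_of_mem hA.some_mem]; exact hπ _)
  rw [ENNReal.le_div_iff_mul_le (Or.inl (ENNReal.ofReal_pos.2 hπA).ne')
    (Or.inl ENNReal.ofReal_ne_top), ← ENNReal.ofReal_mul hlam.le]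
  calc ENNReal.ofReal (lam * ∑' x, A.indicator π x)
      ≤ ENNReal.ofReal (∑' x, A.indicator (fun x => π x * (1 - entryLimit P A S x)) x) :=
        ENNReal.ofReal_le_ofReal
          (hgap.mul_tsum_le_tsum_one_sub_entryLimit hP hπ hlam.le hAS hAfin)
    _ ≤ _ := ofReal_tsum_indicator_le_tsum_measure_escapeEvent hP hμ (hπ · |>.le) hS hAfin

open scoped Classical in
/-- under the hypotheses of the escape-probability lemma, for any nonempty
`A` with `π(A) < ∞` and any `B` disjoint from `A` with `(A ∪ B)ᶜ` finite, the chain started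
from `π_A` enters `A ∪ B` for the first positive time at a point of `B` with probability
at least `lam`. -/
theorem stmt_1 {V : Type*} [Countable V] [MeasurableSpace V]
    (P : V → V → ℝ) (π : V → ℝ) (μ : V → Measure (ℕ → V)) (lam : ℝ)
    (hP : IsTransitionKernel P) (hirr : KernelIrreducible P) (hrev : IsReversing P π)
    (hinf : ¬ Summable π) (hμ : IsMarkovPathLaw P μ)
    (hlam : 0 < lam) (hgap : SpectralGapLB P π lam)
    (A B : Set V) (hA : A.Nonempty)
    (hAfin : Summable (fun x => if x ∈ A then π x else 0))
    (hdisj : Disjoint A B) (hcofin : (A ∪ B)ᶜ.Finite) :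
    ENNReal.ofReal lam ≤
      (∑' x : V, (if x ∈ A then ENNReal.ofReal (π x) else 0) *
          μ x {ω | ∃ t, 0 < t ∧ ω t ∈ B ∧ ∀ s, 0 < s → s < t → ω s ∉ A ∪ B}) /
        ENNReal.ofReal (∑' x : V, if x ∈ A then π x else 0) :=
  stmt_1_general P π μ lam hP hrev hμ hlam hgap A B hA hAfin hcofin
end

section
/- Let (G_n) be finite graphs with |G_n| = n and maximum degree at most d, converging weakly (in the Benjamini–Schramm sense) to a rooted infinite graph (G,ρ). If p < p_c(G), then for every α > 0, the probability that Bernoulli(p) bond percolation on G_n contains a connected component of size at least αn tends to 0 as n → ∞. -/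
open MeasureTheory Filter

/-- An edge `s(a,b)` is open in the configuration `ω` and present in `G`. -/
def SimpleGraph.OpenAdj {V : Type*} (G : SimpleGraph V) (ω : Sym2 V → Bool) (a b : V) : Prop :=
  G.Adj a b ∧ ω s(a, b) = true

/-- `a` and `b` are joined by a path of open edges of `G`. -/
def SimpleGraph.OpenConn {V : Type*} (G : SimpleGraph V) (ω : Sym2 V → Bool) (a b : V) : Prop :=
  Relation.ReflTransGen (G.OpenAdj ω) a b

/-- The configuration `ω` has an infinite open cluster in `G`. -/
def SimpleGraph.HasInfiniteCluster {V : Type*} (G : SimpleGraph V) (ω : Sym2 V → Bool) : Prop :=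
  ∃ v, {w | G.OpenConn ω v w}.Infinite

/-- `μ` is the law of i.i.d. Bernoulli(`p`) random variables indexed by `E`. -/
def IsBernoulliConfig {E : Type*} (p : ℝ) (μ : Measure (E → Bool)) : Prop :=
  IsProbabilityMeasure μ ∧
    ∀ (s : Finset E) (f : E → Bool),
      μ {ω | ∀ e ∈ s, ω e = f e} = ∏ e ∈ s, ENNReal.ofReal (if f e then p else 1 - p)

/-- The critical probability of Bernoulli bond percolation on `G`, defined relative to a
family `μ p` of Bernoulli(`p`) percolation measures. -/
noncomputable def percThreshold {V : Type*} (G : SimpleGraph V)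
    (μ : ℝ → Measure (Sym2 V → Bool)) : ℝ :=
  sInf {p | p ∈ Set.Icc (0 : ℝ) 1 ∧ 0 < μ p {ω | G.HasInfiniteCluster ω}}

/-- The balls of radius `R` around `u` in `G` and around `ρ` in `H` are isomorphic as rooted
graphs. -/
def BallIso {V W : Type*} (G : SimpleGraph V) (u : V) (H : SimpleGraph W) (ρ : W)
    (R : ℕ) : Prop :=
  ∃ φ : (G.induce {w | G.dist u w ≤ R}) ≃g (H.induce {w | H.dist ρ w ≤ R}),
    ((φ ⟨u, by simp [Set.mem_setOf_eq, SimpleGraph.dist_self]⟩ :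
        {w | H.dist ρ w ≤ R}) : W) = ρ

/-- The Cheeger constant of the finite graph `G` is at least `h`: every set `A` of at most
half the vertices has at least `h |A|` edges to its complement. -/
def CheegerLB {V : Type*} [Fintype V] (G : SimpleGraph V) (h : ℝ) : Prop :=
  ∀ A : Set V, A.Nonempty → 2 * A.ncard ≤ Fintype.card V →
    h * A.ncard ≤ ({e | e ∈ G.edgeSet ∧ ∃ a ∈ A, ∃ b ∈ Aᶜ, e = s(a, b)}.ncard : ℝ)

open scoped ENNReal Finset

/-!
Let `L(v, m)` be the event that breadth-first search in the open subgraph, started at `v`, has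
found at least `m + 1` vertices after `m` rounds. Until it exhausts the cluster of `v` the search
finds a new vertex in every round, so `L(v, m)` occurs whenever the cluster of `v` has more than
`m` vertices; on the other hand `L(v, m)` only depends on the edges in the ball of radius `m + 1`
about `v`. Hence `P(L(v, m))` in `G_n` equals `P(L(ρ, m))` in `G` whenever these balls are
isomorphic, and in `G` it decreases, as `m → ∞`, to the probability that the cluster of `ρ` is
infinite, which vanishes below `p_c`. If some cluster of `G_n` has `k ≥ α n ≥ m + 1` vertices,
then `L(v, m)` occurs at each of them, so Markov's inequality for the number of such `v` gives
`α n · P(large cluster) ≤ ∑_v P(L(v, m)) ≤ n P(L(ρ, m)) + #{v : ball not isomorphic}`.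
Divide by `n`, let `n → ∞` and then `m → ∞`.
-/

lemma measurable_comp_right {ι E β : Type*} [MeasurableSpace β] (i : ι → E) :
    Measurable fun ω : E → β => ω ∘ i :=
  measurable_pi_lambda _ fun k => measurable_pi_apply (i k)

namespace IsBernoulliConfig

variable {E E' ι : Type*} {p : ℝ} {μ : Measure (E → Bool)} {μ' : Measure (E' → Bool)}

lemma map_comp {i : ι → E} (hi : Function.Injective i) (h : IsBernoulliConfig p μ) :
    IsBernoulliConfig p (μ.map (· ∘ i)) := by
  have hmeas := measurable_comp_right (β := Bool) i
  have := h.1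
  refine ⟨Measure.isProbabilityMeasure_map hmeas.aemeasurable, fun s f => ?_⟩
  have hcyl : MeasurableSet {c : ι → Bool | ∀ k ∈ s, c k = f k} := by
    simp only [Set.ofPred_forall]
    exact .biInter s.countable_toSet fun k _ => measurable_pi_apply k (measurableSet_singleton _)
  have hpre : (· ∘ i) ⁻¹' {c : ι → Bool | ∀ k ∈ s, c k = f k} =
      {ω | ∀ e ∈ s.map ⟨i, hi⟩, ω e = Function.extend i f (fun _ => false) e} := by
    ext ω
    simp [hi.extend_apply]
  rw [Measure.map_apply hmeas hcyl, hpre, h.2, Finset.prod_map]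
  simp [hi.extend_apply]

lemma unique [Finite ι] {μ₁ μ₂ : Measure (ι → Bool)} (h₁ : IsBernoulliConfig p μ₁)
    (h₂ : IsBernoulliConfig p μ₂) : μ₁ = μ₂ := by
  have := Fintype.ofFinite ι
  refine Measure.ext_iff_singleton.2 fun f => ?_
  have hf : {f} = {ω : ι → Bool | ∀ e ∈ Finset.univ, ω e = f e} := by
    ext ω
    simp [funext_iff]
  rw [hf, h₁.2, h₂.2]

lemma measure_preimage_comp_eq [Finite ι] {i : ι → E} {i' : ι → E'}
    (hi : Function.Injective i) (hi' : Function.Injective i') (h : IsBernoulliConfig p μ)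
    (h' : IsBernoulliConfig p μ') (A : Set (ι → Bool)) :
    μ ((· ∘ i) ⁻¹' A) = μ' ((· ∘ i') ⁻¹' A) := by
  have hA := (Set.toFinite A).measurableSet
  rw [← Measure.map_apply (measurable_comp_right i) hA,
    ← Measure.map_apply (measurable_comp_right i') hA,
    (h.map_comp hi).unique (h'.map_comp hi')]

end IsBernoulliConfig

open Classical in
lemma MeasureTheory.mul_measure_le_sum_measure {Ω ι : Type*} [MeasurableSpace Ω] [Fintype ι]
    (μ : Measure Ω) {s : Set Ω} {t : ι → Set Ω} (ht : ∀ i, MeasurableSet (t i)) {r : ℝ≥0∞}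
    (h : ∀ ω ∈ s, r ≤ #{i | ω ∈ t i}) : r * μ s ≤ ∑ i, μ (t i) := by
  have hcount (ω : Ω) : ∑ i, (t i).indicator 1 ω = (#{i | ω ∈ t i} : ℝ≥0∞) := by
    simp [Set.indicator_apply, Finset.sum_boole]
  calc r * μ s = ∫⁻ _ in s, r ∂μ := (setLIntegral_const s r).symm
    _ ≤ ∫⁻ ω in s, ∑ i, (t i).indicator 1 ω ∂μ :=
      setLIntegral_mono (Finset.measurable_sum _ fun i _ => measurable_one.indicator (ht i))
        fun ω hω => (h ω hω).trans (hcount ω).ge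
    _ ≤ ∫⁻ ω, ∑ i, (t i).indicator 1 ω ∂μ := setLIntegral_le_lintegral _ _
    _ = ∑ i, μ (t i) := by
      rw [lintegral_finsetSum _ fun i _ => measurable_one.indicator (ht i)]
      simp_rw [lintegral_indicator_one (ht _)]

lemma ENNReal.tendsto_nhds_zero_of_eventually_le_add {α β : Type*} {l : Filter α}
    {l' : Filter β} [l'.NeBot] {a : α → ℝ≥0∞} {b : β → ℝ≥0∞} {c : β → α → ℝ≥0∞}
    (hb : Tendsto b l' (nhds 0)) (hc : ∀ j, Tendsto (c j) l (nhds 0))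
    (h : ∀ j, ∀ᶠ x in l, a x ≤ b j + c j x) : Tendsto a l (nhds 0) := by
  refine ENNReal.tendsto_nhds_zero.2 fun ε hε => ?_
  have hε2 : 0 < ε / 2 := ENNReal.half_pos hε.ne'
  obtain ⟨j, hj⟩ := (ENNReal.tendsto_nhds_zero.1 hb _ hε2).exists
  filter_upwards [h j, ENNReal.tendsto_nhds_zero.1 (hc j) _ hε2] with x hx hcx
  calc a x ≤ b j + c j x := hx
    _ ≤ ε / 2 + ε / 2 := add_le_add hj hcx
    _ = ε := ENNReal.add_halves ε

lemma measure_hasInfiniteCluster_eq_zero_of_lt_percThreshold {W : Type*} {G : SimpleGraph W}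
    {ν : ℝ → Measure (Sym2 W → Bool)} {p : ℝ} (hp : p ∈ Set.Icc (0 : ℝ) 1)
    (hsub : p < percThreshold G ν) : ν p {ω | G.HasInfiniteCluster ω} = 0 := by
  by_contra h
  exact hsub.not_ge (csInf_le ⟨0, fun _ hq => hq.1.1⟩ ⟨hp, pos_iff_ne_zero.2 h⟩)

namespace SimpleGraph

variable {V V' W : Type*}

def openBall (H : SimpleGraph V) (ω : Sym2 V → Bool) (v : V) : ℕ → Set V
  | 0 => {v}
  | m + 1 => openBall H ω v m ∪ {w | ∃ u ∈ openBall H ω v m, H.OpenAdj ω u w}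

def largeOpenBall (H : SimpleGraph V) (v : V) (m : ℕ) : Set (Sym2 V → Bool) :=
  {ω | m + 1 ≤ (H.openBall ω v m).ncard}

variable {H : SimpleGraph V} {H' : SimpleGraph V'} {G : SimpleGraph W} {ω : Sym2 V → Bool}
  {v : V} {ρ : W}

lemma OpenAdj.symm {a b : V} (h : H.OpenAdj ω a b) : H.OpenAdj ω b a :=
  ⟨h.1.symm, Sym2.eq_swap ▸ h.2⟩

lemma OpenConn.symm {a b : V} (h : H.OpenConn ω a b) : H.OpenConn ω b a :=
  have : Std.Symm (H.OpenAdj ω) := ⟨fun _ _ => OpenAdj.symm⟩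
  Relation.ReflTransGen.stdSymm.symm _ _ h

lemma openBall_mono : Monotone (H.openBall ω v) :=
  monotone_nat_of_le_succ fun _ => Set.subset_union_left

lemma mem_openBall_self (m : ℕ) : v ∈ H.openBall ω v m :=
  openBall_mono m.zero_le rfl

lemma mem_openBall_succ {m : ℕ} {u w : V} (hu : u ∈ H.openBall ω v m) (h : H.OpenAdj ω u w) :
    w ∈ H.openBall ω v (m + 1) :=
  Or.inr ⟨u, hu, h⟩

lemma openBall_finite (hfin : ∀ u, (H.neighborSet u).Finite) (m : ℕ) :
    (H.openBall ω v m).Finite := by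
  induction m with
  | zero => exact Set.finite_singleton v
  | succ m ih =>
    refine ih.union ((ih.biUnion fun u _ => hfin u).subset ?_)
    rintro w ⟨u, hu, huw⟩
    exact Set.mem_biUnion hu huw.1

lemma openBall_subset_openBall_true (m : ℕ) :
    H.openBall ω v m ⊆ H.openBall (fun _ => true) v m := by
  induction m with
  | zero => rfl
  | succ m ih =>
    rintro w (hw | ⟨u, hu, huw⟩)
    · exact openBall_mono m.le_succ (ih hw)
    · exact mem_openBall_succ (ih hu) ⟨huw.1, rfl⟩

lemma openConn_of_mem_openBall {m : ℕ} {w : V} (hw : w ∈ H.openBall ω v m) :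
    H.OpenConn ω v w := by
  induction m generalizing w with
  | zero => exact hw ▸ Relation.ReflTransGen.refl
  | succ m ih =>
    rcases hw with hw | ⟨u, hu, huw⟩
    · exact ih hw
    · exact (ih hu).tail huw

lemma openBall_subset_cluster (m : ℕ) : H.openBall ω v m ⊆ {w | H.OpenConn ω v w} :=
  fun _ => openConn_of_mem_openBall

lemma exists_openAdj_of_notMem_openBall {m : ℕ} {w : V} (h : H.OpenConn ω v w)
    (hw : w ∉ H.openBall ω v m) :
    ∃ u ∈ H.openBall ω v m, ∃ u', H.OpenAdj ω u u' ∧ u' ∉ H.openBall ω v m := by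
  induction h with
  | refl => exact absurd (mem_openBall_self m) hw
  | @tail u w _ huw ih =>
    by_cases hu : u ∈ H.openBall ω v m
    · exact ⟨u, hu, w, huw, hw⟩
    · exact ih hu

lemma succ_le_ncard_openBall_or_eq (hfin : ∀ u, (H.neighborSet u).Finite) (m : ℕ) :
    m + 1 ≤ (H.openBall ω v m).ncard ∨ H.openBall ω v m = {w | H.OpenConn ω v w} := by
  induction m with
  | zero => simp [openBall]
  | succ m ih =>
    by_cases hC : {w | H.OpenConn ω v w} ⊆ H.openBall ω v m
    · exact Or.inr <| (openBall_subset_cluster _).antisymm (hC.trans (openBall_mono m.le_succ))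
    obtain ⟨w, hw, hwm⟩ := Set.not_subset.1 hC
    obtain ⟨u, hu, u', huu', hu'⟩ := exists_openAdj_of_notMem_openBall hw hwm
    have hlt : (H.openBall ω v m).ncard < (H.openBall ω v (m + 1)).ncard :=
      Set.ncard_lt_ncard ⟨openBall_mono m.le_succ, fun h => hu' (h (mem_openBall_succ hu huu'))⟩
        (openBall_finite hfin _)
    rcases ih with ih | ih
    · exact Or.inl (by omega)
    · exact absurd ih.ge hC

lemma exists_walk_of_mem_openBall {m : ℕ} {w : V} (hw : w ∈ H.openBall ω v m) :
    ∃ q : H.Walk v w, q.length ≤ m := by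
  induction m generalizing w with
  | zero => exact hw ▸ ⟨.nil, le_rfl⟩
  | succ m ih =>
    rcases hw with hw | ⟨u, hu, huw⟩
    · obtain ⟨q, hq⟩ := ih hw
      exact ⟨q, hq.trans m.le_succ⟩
    · obtain ⟨q, hq⟩ := ih hu
      exact ⟨q.concat huw.1, by rw [Walk.length_concat]; omega⟩

lemma dist_le_of_mem_openBall {m : ℕ} {w : V} (hw : w ∈ H.openBall ω v m) : H.dist v w ≤ m :=
  let ⟨q, hq⟩ := exists_walk_of_mem_openBall hw
  (dist_le q).trans hq

lemma image_openBall_subset {ω' : Sym2 V' → Bool} (f : V → V') {m : ℕ}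
    (hf : ∀ a ∈ H.openBall ω v m, ∀ b, H.OpenAdj ω a b → H'.OpenAdj ω' (f a) (f b)) :
    f '' H.openBall ω v m ⊆ H'.openBall ω' (f v) m := by
  induction m with
  | zero => simp [openBall]
  | succ m ih =>
    have ih := ih fun a ha => hf a (openBall_mono m.le_succ ha)
    rintro _ ⟨w, hw | ⟨u, hu, huw⟩, rfl⟩
    · exact openBall_mono m.le_succ (ih ⟨w, hw, rfl⟩)
    · exact mem_openBall_succ (ih ⟨u, hu, rfl⟩) (hf u (openBall_mono m.le_succ hu) w huw)

lemma Iso.image_openBall (φ : H ≃g H') (ω' : Sym2 V' → Bool) (v : V) (m : ℕ) :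
    φ '' H.openBall (ω' ∘ Sym2.map φ) v m = H'.openBall ω' (φ v) m := by
  refine (image_openBall_subset φ fun _ _ _ h => ⟨φ.map_adj_iff.2 h.1, h.2⟩).antisymm ?_
  have h := image_openBall_subset (H := H') (H' := H) (ω := ω') (ω' := ω' ∘ Sym2.map φ) (v := φ v)
    (m := m) φ.symm fun a _ b h => ⟨φ.symm.map_adj_iff.2 h.1, by simpa using h.2⟩
  rw [φ.symm_apply_apply] at h
  exact fun w hw => ⟨φ.symm w, h ⟨w, hw, rfl⟩, φ.apply_symm_apply w⟩

lemma openBall_eq_image_induce {D : Set V} (hv : v ∈ D) {m : ℕ}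
    (hD : H.openBall ω v (m + 1) ⊆ D) :
    H.openBall ω v m =
      Subtype.val '' (H.induce D).openBall (ω ∘ Sym2.map Subtype.val) ⟨v, hv⟩ m := by
  classical
  refine subset_antisymm ?_ (image_openBall_subset Subtype.val fun _ _ _ h => h)
  let f : V → D := fun a => if h : a ∈ D then ⟨a, h⟩ else ⟨v, hv⟩
  have hf : ∀ a ∈ D, (f a : V) = a := fun a ha => by simp [f, ha]
  have hfv : f v = ⟨v, hv⟩ := by simp [f, hv]
  have himage := image_openBall_subset (H' := H.induce D) (ω' := ω ∘ Sym2.map Subtype.val) f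
    (m := m) fun a ha b hab => by
      have ha' := hD (openBall_mono m.le_succ ha)
      have hb' := hD (mem_openBall_succ ha hab)
      simpa [OpenAdj, f, ha', hb'] using hab
  rw [hfv] at himage
  exact fun w hw => ⟨f w, himage ⟨w, hw, rfl⟩, hf w (hD (openBall_mono m.le_succ hw))⟩

lemma largeOpenBall_eq_preimage_induce {D : Set V} (hv : v ∈ D) {m : ℕ}
    (hD : ∀ ω, H.openBall ω v (m + 1) ⊆ D) :
    H.largeOpenBall v m =
      (· ∘ Sym2.map Subtype.val) ⁻¹' (H.induce D).largeOpenBall ⟨v, hv⟩ m := by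
  ext ω
  simp only [largeOpenBall, Set.mem_preimage, Set.mem_ofPred_eq]
  rw [openBall_eq_image_induce hv (hD ω), Set.ncard_image_of_injective _ Subtype.val_injective]

lemma Iso.preimage_largeOpenBall (φ : H ≃g H') (v : V) (m : ℕ) :
    (· ∘ Sym2.map φ) ⁻¹' H.largeOpenBall v m = H'.largeOpenBall (φ v) m := by
  ext ω'
  simp only [largeOpenBall, Set.mem_preimage, Set.mem_ofPred_eq]
  rw [← φ.image_openBall, Set.ncard_image_of_injective _ φ.injective]

lemma mem_largeOpenBall_of_le_ncard (hfin : ∀ u, (H.neighborSet u).Finite) {m : ℕ}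
    (h : m + 1 ≤ {w | H.OpenConn ω v w}.ncard) :
    ω ∈ H.largeOpenBall v m := by
  rcases succ_le_ncard_openBall_or_eq hfin m with hm | hm
  · exact hm
  · show m + 1 ≤ _
    rwa [hm]

lemma antitone_largeOpenBall (hfin : ∀ u, (H.neighborSet u).Finite) :
    Antitone (H.largeOpenBall v) := by
  refine antitone_nat_of_succ_le fun m ω hω => ?_
  rcases succ_le_ncard_openBall_or_eq hfin m with hm | hm
  · exact hm
  · have : H.openBall ω v (m + 1) ⊆ H.openBall ω v m := hm ▸ openBall_subset_cluster _
    exact (Nat.le_succ _).trans (hω.trans (Set.ncard_le_ncard this (openBall_finite hfin m)))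

lemma iInter_largeOpenBall_subset :
    ⋂ m, H.largeOpenBall v m ⊆ {ω | {w | H.OpenConn ω v w}.Infinite} := by
  intro ω hω hC
  have h := Set.mem_iInter.1 hω {w | H.OpenConn ω v w}.ncard
  have := Set.ncard_le_ncard (openBall_subset_cluster (H := H) (ω := ω) (v := v)
    {w | H.OpenConn ω v w}.ncard) hC
  exact absurd (h.trans this) (by omega)

lemma measurableSet_largeOpenBall (hfin : ∀ u, (H.neighborSet u).Finite) (m : ℕ) :
    MeasurableSet (H.largeOpenBall v m) := by
  have : Finite (H.openBall (fun _ => true) v (m + 1)) := (openBall_finite hfin _).to_subtype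
  rw [largeOpenBall_eq_preimage_induce (mem_openBall_self _)
    fun _ => openBall_subset_openBall_true _]
  exact measurable_comp_right _ (Set.toFinite _).measurableSet

lemma measure_largeOpenBall_eq_of_ballIso [Finite V] {m : ℕ} (hiso : BallIso H v G ρ (m + 1))
    {p : ℝ} {μ : Measure (Sym2 V → Bool)} {ν : Measure (Sym2 W → Bool)}
    (hμ : IsBernoulliConfig p μ) (hν : IsBernoulliConfig p ν) :
    μ (H.largeOpenBall v m) = ν (G.largeOpenBall ρ m) := by
  obtain ⟨φ, hφ⟩ := hiso
  rw [largeOpenBall_eq_preimage_induce (D := {w | H.dist v w ≤ m + 1}) (by simp)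
      fun _ _ => dist_le_of_mem_openBall,
    largeOpenBall_eq_preimage_induce (D := {w | G.dist ρ w ≤ m + 1}) (by simp)
      fun _ _ => dist_le_of_mem_openBall,
    show (⟨ρ, by simp⟩ : {w | G.dist ρ w ≤ m + 1}) = φ ⟨v, by simp⟩ from Subtype.ext hφ.symm,
    ← φ.preimage_largeOpenBall, Set.preimage_preimage]
  exact IsBernoulliConfig.measure_preimage_comp_eq (Sym2.map.injective Subtype.val_injective)
    ((Sym2.map.injective Subtype.val_injective).comp (Sym2.map.injective φ.injective)) hμ hν _

lemma tendsto_measure_largeOpenBall (hfin : ∀ w, (G.neighborSet w).Finite)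
    {ν : Measure (Sym2 W → Bool)} [IsFiniteMeasure ν] (h : ν {ω | G.HasInfiniteCluster ω} = 0) :
    Tendsto (fun m => ν (G.largeOpenBall ρ m)) atTop (nhds 0) := by
  have hlim := tendsto_measure_iInter_atTop
    (fun m => (measurableSet_largeOpenBall (v := ρ) hfin m).nullMeasurableSet)
    (antitone_largeOpenBall hfin) ⟨0, measure_ne_top ν _⟩
  have hinf : ⋂ m, G.largeOpenBall ρ m ⊆ {ω | G.HasInfiniteCluster ω} :=
    iInter_largeOpenBall_subset.trans fun ω hω => ⟨ρ, hω⟩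
  rwa [measure_mono_null hinf h] at hlim

open Classical in
lemma ncard_cluster_le_card_largeOpenBall [Fintype V] {m : ℕ}
    (h : m + 1 ≤ {w | H.OpenConn ω v w}.ncard) :
    {w | H.OpenConn ω v w}.ncard ≤ #{w | ω ∈ H.largeOpenBall w m} := by
  rw [← Set.ncard_coe_finset]
  refine Set.ncard_le_ncard (fun w hw => ?_)
  have hcl : {u | H.OpenConn ω w u} = {u | H.OpenConn ω v u} :=
    Set.ext fun u => ⟨hw.trans, hw.symm.trans⟩
  simpa using mem_largeOpenBall_of_le_ncard (fun _ => Set.toFinite _) (hcl ▸ h)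

open Classical in
lemma ofReal_mul_measure_exists_large_cluster_le_sum [Fintype V] (μ : Measure (Sym2 V → Bool))
    {α : ℝ} {m : ℕ} (hm : m + 1 ≤ α * Fintype.card V) :
    ENNReal.ofReal (α * Fintype.card V) *
        μ {ω | ∃ v, α * Fintype.card V ≤ ({w | H.OpenConn ω v w}.ncard : ℝ)} ≤
      ∑ v, μ (H.largeOpenBall v m) := by
  refine mul_measure_le_sum_measure μ (fun _ => (Set.toFinite _).measurableSet) ?_
  rintro ω ⟨v, hv⟩
  have hv' : m + 1 ≤ {w | H.OpenConn ω v w}.ncard := by exact_mod_cast hm.trans hv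
  rw [← ENNReal.ofReal_natCast]
  exact ENNReal.ofReal_le_ofReal
    (hv.trans (by exact_mod_cast ncard_cluster_le_card_largeOpenBall hv'))

open Classical in
lemma sum_measure_largeOpenBall_le [Fintype V] {m : ℕ} {p : ℝ} {μ : Measure (Sym2 V → Bool)}
    {ν : Measure (Sym2 W → Bool)} (hμ : IsBernoulliConfig p μ) (hν : IsBernoulliConfig p ν) :
    ∑ v, μ (H.largeOpenBall v m) ≤
      Fintype.card V * ν (G.largeOpenBall ρ m) + #{v | ¬BallIso H v G ρ (m + 1)} := by
  have := hμ.1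
  calc ∑ v, μ (H.largeOpenBall v m)
      ≤ ∑ v, (ν (G.largeOpenBall ρ m) + if BallIso H v G ρ (m + 1) then 0 else 1) := by
        refine Finset.sum_le_sum fun v _ => ?_
        split_ifs with hv
        · rw [add_zero, measure_largeOpenBall_eq_of_ballIso hv hμ hν]
        · exact prob_le_one.trans le_add_self
    _ = Fintype.card V * ν (G.largeOpenBall ρ m) + #{v | ¬BallIso H v G ρ (m + 1)} := by
        simp [Finset.sum_add_distrib, Finset.sum_ite]

lemma ofReal_mul_measure_exists_large_cluster_le [Fintype V] {m : ℕ} {p : ℝ}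
    {μ : Measure (Sym2 V → Bool)} {ν : Measure (Sym2 W → Bool)} (hμ : IsBernoulliConfig p μ)
    (hν : IsBernoulliConfig p ν) {α : ℝ} (hm : m + 1 ≤ α * Fintype.card V) :
    ENNReal.ofReal α *
        μ {ω | ∃ v, α * Fintype.card V ≤ ({w | H.OpenConn ω v w}.ncard : ℝ)} ≤
      ν (G.largeOpenBall ρ m) +
        ENNReal.ofReal (1 - {v | BallIso H v G ρ (m + 1)}.ncard / Fintype.card V) := by
  classical
  set n := Fintype.card V
  have hn : n ≠ 0 := by
    rintro hn
    rw [hn, Nat.cast_zero, mul_zero] at hm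
    linarith
  have hbad : (#{v | ¬BallIso H v G ρ (m + 1)} : ℝ≥0∞) =
      n * ENNReal.ofReal (1 - {v | BallIso H v G ρ (m + 1)}.ncard / n) := by
    have hsplit : #{v | BallIso H v G ρ (m + 1)} + #{v | ¬BallIso H v G ρ (m + 1)} = n :=
      Finset.card_filter_add_card_filter_not _
    have hgood : {v | BallIso H v G ρ (m + 1)}.ncard = #{v | BallIso H v G ρ (m + 1)} := by
      rw [← Finset.coe_filter_univ, Set.ncard_coe_finset]
    rw [← ENNReal.ofReal_natCast n, ← ENNReal.ofReal_mul n.cast_nonneg, mul_sub, mul_one,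
      mul_div_cancel₀ _ (Nat.cast_ne_zero.2 hn), ← ENNReal.ofReal_natCast, hgood, ← hsplit]
    push_cast
    ring_nf
  refine (ENNReal.mul_le_mul_iff_right (Nat.cast_ne_zero.2 hn) (ENNReal.natCast_ne_top n)).1 ?_
  calc (n : ℝ≥0∞) * (ENNReal.ofReal α * μ _)
      = ENNReal.ofReal (α * n) * μ _ := by
        rw [ENNReal.ofReal_mul' n.cast_nonneg, ENNReal.ofReal_natCast, mul_left_comm, mul_assoc]
    _ ≤ ∑ v, μ (H.largeOpenBall v m) := ofReal_mul_measure_exists_large_cluster_le_sum μ hm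
    _ ≤ n * ν (G.largeOpenBall ρ m) + #{v | ¬BallIso H v G ρ (m + 1)} :=
        sum_measure_largeOpenBall_le hμ hν
    _ = n * (ν (G.largeOpenBall ρ m) +
          ENNReal.ofReal (1 - {v | BallIso H v G ρ (m + 1)}.ncard / n)) := by
        rw [hbad, mul_add]

end SimpleGraph

theorem stmt_11_general (V : ℕ → Type*) [∀ n, Fintype (V n)] (Gn : ∀ n, SimpleGraph (V n))
    (hcard : ∀ n, Fintype.card (V n) = n)
    (d : ℕ)
    {W : Type*} (G : SimpleGraph W) (ρ : W)
    (hdeg : ∀ w, (G.neighborSet w).Finite ∧ (G.neighborSet w).ncard ≤ d)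
    (hconv : ∀ R : ℕ,
      Tendsto (fun n => ({v : V n | BallIso (Gn n) v G ρ R}.ncard : ℝ) / n) atTop (nhds 1))
    (ν : ℝ → Measure (Sym2 W → Bool))
    (hν : ∀ q ∈ Set.Icc (0 : ℝ) 1, IsBernoulliConfig q (ν q))
    (p : ℝ) (hp : p ∈ Set.Icc (0 : ℝ) 1) (hsub : p < percThreshold G ν)
    (μn : ∀ n, Measure (Sym2 (V n) → Bool)) (hμn : ∀ n, IsBernoulliConfig p (μn n)) :
    ∀ α : ℝ, 0 < α →
      Tendsto
        (fun n => μn n {ω | ∃ v, α * n ≤ ({w | (Gn n).OpenConn ω v w}.ncard : ℝ)})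
        atTop (nhds 0) := by
  intro α hα
  have := (hν p hp).1
  have hlarge := SimpleGraph.tendsto_measure_largeOpenBall (ρ := ρ) (fun w => (hdeg w).1)
    (measure_hasInfiniteCluster_eq_zero_of_lt_percThreshold hp hsub)
  have hbad (m : ℕ) : Tendsto
      (fun n => ENNReal.ofReal (1 - {v | BallIso (Gn n) v G ρ (m + 1)}.ncard / n)) atTop
      (nhds 0) := by
    simpa using ENNReal.tendsto_ofReal ((hconv (m + 1)).const_sub 1)
  have hscaled : Tendsto (fun n => ENNReal.ofReal α *
      μn n {ω | ∃ v, α * n ≤ ({w | (Gn n).OpenConn ω v w}.ncard : ℝ)}) atTop (nhds 0) := by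
    refine ENNReal.tendsto_nhds_zero_of_eventually_le_add hlarge hbad fun m => ?_
    filter_upwards [(tendsto_natCast_atTop_atTop.const_mul_atTop hα).eventually_ge_atTop
      ((m : ℝ) + 1)] with n hn
    simpa only [hcard] using SimpleGraph.ofReal_mul_measure_exists_large_cluster_le (G := G)
      (ρ := ρ) (H := Gn n) (hμn n) (hν p hp) (m := m) (by rwa [hcard])
  have hα0 : ENNReal.ofReal α ≠ 0 := (ENNReal.ofReal_pos.2 hα).ne'
  simpa [ENNReal.inv_mul_cancel_left hα0 ENNReal.ofReal_ne_top] using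
    ENNReal.Tendsto.const_mul hscaled (Or.inr (ENNReal.inv_ne_top.2 hα0))

/-- let `G_n` be finite graphs with `|G_n| = n` and maximum degree at most `d`,
converging weakly (Benjamini–Schramm) to a rooted infinite bounded-degree graph `(G, ρ)`.
If `p < p_c(G)`, then for every `α > 0` the probability that Bernoulli(`p`) bond percolation
on `G_n` contains a connected component of size at least `α n` tends to `0`. -/
theorem stmt_11 (V : ℕ → Type*) [∀ n, Fintype (V n)] (Gn : ∀ n, SimpleGraph (V n))
    (hcard : ∀ n, Fintype.card (V n) = n)
    (d : ℕ) (hdegn : ∀ n v, ((Gn n).neighborSet v).ncard ≤ d)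
    {W : Type*} [Infinite W] (G : SimpleGraph W) (ρ : W)
    (hdeg : ∀ w, (G.neighborSet w).Finite ∧ (G.neighborSet w).ncard ≤ d)
    (hconv : ∀ R : ℕ,
      Tendsto (fun n => ({v : V n | BallIso (Gn n) v G ρ R}.ncard : ℝ) / n) atTop (nhds 1))
    (ν : ℝ → Measure (Sym2 W → Bool))
    (hν : ∀ q ∈ Set.Icc (0 : ℝ) 1, IsBernoulliConfig q (ν q))
    (p : ℝ) (hp : p ∈ Set.Icc (0 : ℝ) 1) (hsub : p < percThreshold G ν)
    (μn : ∀ n, Measure (Sym2 (V n) → Bool)) (hμn : ∀ n, IsBernoulliConfig p (μn n)) :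
    ∀ α : ℝ, 0 < α →
      Tendsto
        (fun n => μn n {ω | ∃ v, α * n ≤ ({w | (Gn n).OpenConn ω v w}.ncard : ℝ)})
        atTop (nhds 0) :=
  stmt_11_general V Gn hcard d G ρ hdeg hconv ν hν p hp hsub μn hμn
end
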